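/- arXiv:1204.2603 — 4 statements merged into one kernel-verified Lean document; each statement's English description precedes it below -/
import Mathlib

section
/- Let p be a prime, θ ∈ ℚ_p with |θ|_p ≥ 1 and θ ≠ 0, and 0 < δ < 1. For a null sequence x = (x_j) in ℚ_p with ‖x‖ := sup_j |x_j|_p ≤ δ, define F_i(x,θ) = ((θ−1)x_i + ∑_{j=1}^∞ x_j + 1)/(∑_{j=1}^∞ x_j + θ) for each i ∈ ℕ. Then for any two such sequences x, y with ‖x‖ ≤ δ and ‖y‖ ≤ δ, one has |F_i(x,θ) − F_i(y,θ)|_p ≤ ‖x − y‖ for every i. -/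
open Filter Topology BigOperators

noncomputable def Fmap {p : ℕ} [Fact p.Prime] (θ : ℚ_[p]) (x : ℕ → ℚ_[p]) (i : ℕ) : ℚ_[p] :=
  ((θ - 1) * x i + (∑' j, x j) + 1) / ((∑' j, x j) + θ)

theorem stmt2 (p : ℕ) [Fact p.Prime] (θ : ℚ_[p]) (hθ0 : θ ≠ 0) (hθ : 1 ≤ ‖θ‖)
    (δ : ℝ) (hδ0 : 0 < δ) (hδ1 : δ < 1) (x y : ℕ → ℚ_[p])
    (hx0 : Tendsto x atTop (nhds 0)) (hy0 : Tendsto y atTop (nhds 0))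
    (hx : ∀ j, ‖x j‖ ≤ δ) (hy : ∀ j, ‖y j‖ ≤ δ) :
    ∀ i, ‖Fmap θ x i - Fmap θ y i‖ ≤ ⨆ j, ‖x j - y j‖ := by
  intro i
  have hsx : Summable x := by
    apply NonarchimedeanAddGroup.summable_of_tendsto_cofinite_zero
    rwa [Nat.cofinite_eq_atTop]
  have hsy : Summable y := by
    apply NonarchimedeanAddGroup.summable_of_tendsto_cofinite_zero
    rwa [Nat.cofinite_eq_atTop]
  set Sx := ∑' j, x j with hSxdef
  set Sy := ∑' j, y j with hSydef
  have hnSx : ‖Sx‖ ≤ δ :=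
    IsUltrametricDist.norm_tsum_le_of_forall_le_of_nonneg hδ0.le hx
  have hnSy : ‖Sy‖ ≤ δ :=
    IsUltrametricDist.norm_tsum_le_of_forall_le_of_nonneg hδ0.le hy
  have hθpos : (0:ℝ) < ‖θ‖ := lt_of_lt_of_le one_pos hθ
  have hdx : ‖Sx + θ‖ = ‖θ‖ := by
    rw [IsUltrametricDist.norm_add_eq_max_of_norm_ne_norm
      (ne_of_lt (lt_of_le_of_lt hnSx (lt_of_lt_of_le hδ1 hθ)))]
    exact max_eq_right (le_of_lt (lt_of_le_of_lt hnSx (lt_of_lt_of_le hδ1 hθ)))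
  have hdy : ‖Sy + θ‖ = ‖θ‖ := by
    rw [IsUltrametricDist.norm_add_eq_max_of_norm_ne_norm
      (ne_of_lt (lt_of_le_of_lt hnSy (lt_of_lt_of_le hδ1 hθ)))]
    exact max_eq_right (le_of_lt (lt_of_le_of_lt hnSy (lt_of_lt_of_le hδ1 hθ)))
  have hx0' : Sx + θ ≠ 0 := by
    intro h
    rw [h, norm_zero] at hdx
    exact hθ0 (norm_eq_zero.mp hdx.symm)
  have hy0' : Sy + θ ≠ 0 := by
    intro h
    rw [h, norm_zero] at hdy
    exact hθ0 (norm_eq_zero.mp hdy.symm)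
  have key : Fmap θ x i - Fmap θ y i =
      (θ - 1) * ((Sy + θ) * (x i - y i) + (1 - y i) * (Sx - Sy)) /
        ((Sx + θ) * (Sy + θ)) := by
    unfold Fmap
    rw [← hSxdef, ← hSydef]
    field_simp
    ring
  set M := ⨆ j, ‖x j - y j‖ with hM
  have hbdd : BddAbove (Set.range fun j => ‖x j - y j‖) := by
    refine ⟨δ + δ, ?_⟩
    rintro _ ⟨j, rfl⟩
    exact le_trans (norm_sub_le _ _) (add_le_add (hx j) (hy j))
  have hMle : ∀ j, ‖x j - y j‖ ≤ M := fun j => le_ciSup hbdd j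
  have hM0 : 0 ≤ M := le_trans (norm_nonneg _) (hMle 0)
  have hS : ‖Sx - Sy‖ ≤ M := by
    rw [hSxdef, hSydef, ← Summable.tsum_sub hsx hsy]
    exact IsUltrametricDist.norm_tsum_le _
  have hθ1 : ‖θ - 1‖ ≤ ‖θ‖ := by
    rw [sub_eq_add_neg]
    refine le_trans (IsUltrametricDist.norm_add_le_max θ (-1)) ?_
    simp [max_le_iff, hθ]
  have hB : ‖(Sy + θ) * (x i - y i) + (1 - y i) * (Sx - Sy)‖ ≤ ‖θ‖ * M := by
    refine le_trans (IsUltrametricDist.norm_add_le_max _ _) (max_le ?_ ?_)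
    · rw [norm_mul, hdy]
      exact mul_le_mul_of_nonneg_left (hMle i) hθpos.le
    · rw [norm_mul]
      have h1 : ‖(1:ℚ_[p]) - y i‖ ≤ ‖θ‖ := by
        rw [sub_eq_add_neg]
        refine le_trans (IsUltrametricDist.norm_add_le_max _ _) (max_le ?_ ?_)
        · simpa using hθ
        · simpa using le_trans (hy i) (le_trans hδ1.le hθ)
      exact mul_le_mul h1 hS (norm_nonneg _) hθpos.le
  rw [key, norm_div, norm_mul, norm_mul, hdx, hdy]
  rw [div_le_iff₀ (by positivity)]
  calc ‖θ - 1‖ * ‖(Sy + θ) * (x i - y i) + (1 - y i) * (Sx - Sy)‖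
      ≤ ‖θ‖ * (‖θ‖ * M) :=
        mul_le_mul hθ1 hB (norm_nonneg _) hθpos.le
    _ = M * (‖θ‖ * ‖θ‖) := by ring
end

section
/- Let p be a prime, k ≥ 1 an integer, θ ∈ ℚ_p with |θ|_p ≥ 1, and 0 < δ < 1. Let λ = (λ(i))_{i∈ℕ} be a null sequence in ℚ_p with |λ(i)|_p ≤ δ for all i. Define the map 𝓕_θ on B_δ = { x ∈ c_0 : ‖x‖ ≤ δ } by (𝓕_θ(x))_i = λ(i)·(F_i(x,θ))^k, where F_i(x,θ) = ((θ−1)x_i + ∑_j x_j + 1)/(∑_j x_j + θ). Then 𝓕_θ maps B_δ into B_δ. -/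
open Filter Topology BigOperators

theorem stmt4 (p k : ℕ) [Fact p.Prime] (hk : 1 ≤ k) (θ : ℚ_[p]) (hθ : 1 ≤ ‖θ‖)
    (δ : ℝ) (hδ0 : 0 < δ) (hδ1 : δ < 1) (l : ℕ → ℚ_[p])
    (hl0 : Tendsto l atTop (nhds 0)) (hl : ∀ i, ‖l i‖ ≤ δ)
    (x : ℕ → ℚ_[p]) (hx0 : Tendsto x atTop (nhds 0)) (hx : ∀ i, ‖x i‖ ≤ δ) :
    Tendsto (fun i => l i * (Fmap θ x i) ^ k) atTop (nhds 0) ∧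
      ∀ i, ‖l i * (Fmap θ x i) ^ k‖ ≤ δ := by
  have hS : ‖∑' j, x j‖ ≤ δ :=
    IsUltrametricDist.norm_tsum_le_of_forall_le_of_nonneg hδ0.le hx
  have hlt : ‖∑' j, x j‖ < ‖θ‖ := lt_of_le_of_lt hS (lt_of_lt_of_le hδ1 hθ)
  have hden : ‖(∑' j, x j) + θ‖ = ‖θ‖ := by
    rw [Padic.add_eq_max_of_ne hlt.ne, max_eq_right hlt.le]
  have hF : ∀ i, ‖Fmap θ x i‖ ≤ 1 := by
    intro i
    rw [Fmap, norm_div, hden]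
    rw [div_le_one (lt_of_lt_of_le one_pos hθ)]
    have h1 : ‖(θ - 1) * x i‖ ≤ ‖θ‖ := by
      rw [norm_mul]
      calc ‖θ - 1‖ * ‖x i‖ ≤ max ‖θ‖ 1 * 1 := by
            apply mul_le_mul _ ((hx i).trans hδ1.le) (norm_nonneg _) (le_max_of_le_right zero_le_one)
            simpa [sub_eq_add_neg] using IsUltrametricDist.norm_add_le_max θ (-1)
        _ = ‖θ‖ := by rw [mul_one, max_eq_left hθ]
    have h2 : ‖(∑' j, x j)‖ ≤ ‖θ‖ := hS.trans (hδ1.le.trans hθ)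
    calc ‖(θ - 1) * x i + (∑' j, x j) + 1‖
        ≤ max (max ‖(θ - 1) * x i‖ ‖(∑' j, x j)‖) ‖(1 : ℚ_[p])‖ :=
          le_trans (IsUltrametricDist.norm_add_le_max _ _)
            (max_le_max (IsUltrametricDist.norm_add_le_max _ _) le_rfl)
      _ ≤ ‖θ‖ := by
          simp only [max_le_iff, norm_one]
          exact ⟨⟨h1, h2⟩, hθ⟩
  have hb : ∀ i, ‖l i * (Fmap θ x i) ^ k‖ ≤ ‖l i‖ := by
    intro i
    rw [norm_mul, norm_pow]
    calc ‖l i‖ * ‖Fmap θ x i‖ ^ k ≤ ‖l i‖ * 1 ^ k :=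
          mul_le_mul_of_nonneg_left (pow_le_pow_left₀ (norm_nonneg _) (hF i) k) (norm_nonneg _)
      _ = ‖l i‖ := by rw [one_pow, mul_one]
  constructor
  · apply squeeze_zero_norm hb
    simpa using hl0.norm
  · exact fun i => (hb i).trans (hl i)
end

section
/- Let p be a prime, k ≥ 1 an integer, θ ∈ ℚ_p with |θ|_p ≥ 1, and 0 < δ < 1. Let λ be a null sequence in ℚ_p with |λ(i)|_p ≤ δ for all i. Define 𝓕_θ on B_δ by (𝓕_θ(x))_i = λ(i)·(F_i(x,θ))^k with F_i as above. Then for all x, y ∈ B_δ, ‖𝓕_θ(x) − 𝓕_θ(y)‖ ≤ δ·‖x − y‖; in particular 𝓕_θ is a contraction on B_δ with contraction constant δ. -/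
open Filter Topology BigOperators

/-!
Since `δ < 1 ≤ |θ|`, the denominators `∑ x_j + θ` all have absolute value exactly `|θ|`, so
`|F_i| ≤ 1`, and writing `F_i = 1 + (θ - 1)(x_i - 1)/(∑ x_j + θ)` shows that `F_i` is
`1`-Lipschitz in the sup norm. The factorization of `a^k - b^k` then makes `a ↦ a^k`
`1`-Lipschitz on the unit ball, and the factor `λ(i)` contributes the constant `δ`.
-/

namespace IsUltrametricDist

section AddGroup

variable {G : Type*} [SeminormedAddGroup G] [IsUltrametricDist G]

lemma norm_sub_le_max (a b : G) : ‖a - b‖ ≤ max ‖a‖ ‖b‖ := by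
  simpa [sub_eq_add_neg] using norm_add_le_max a (-b)

lemma norm_add_eq_right_of_norm_lt {a b : G} (h : ‖a‖ < ‖b‖) : ‖a + b‖ = ‖b‖ := by
  rw [norm_add_eq_max_of_norm_ne_norm h.ne, max_eq_right h.le]

end AddGroup

lemma norm_pow_sub_pow_le {R : Type*} [SeminormedCommRing R] [NormOneClass R]
    [IsUltrametricDist R] {a b : R} (ha : ‖a‖ ≤ 1) (hb : ‖b‖ ≤ 1) (n : ℕ) :
    ‖a ^ n - b ^ n‖ ≤ ‖a - b‖ := by
  have hpow : ∀ c : R, ‖c‖ ≤ 1 → ∀ m : ℕ, ‖c ^ m‖ ≤ 1 := fun c hc m =>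
    (_root_.norm_pow_le c m).trans (pow_le_one₀ (norm_nonneg c) hc)
  have hgeom : ‖∑ i ∈ Finset.range n, a ^ i * b ^ (n - 1 - i)‖ ≤ 1 :=
    norm_sum_le_of_forall_le_of_nonneg zero_le_one fun i _ =>
      (norm_mul_le _ _).trans (mul_le_one₀ (hpow a ha i) (norm_nonneg _) (hpow b hb _))
  rw [← geom_sum₂_mul]
  exact (norm_mul_le _ _).trans (mul_le_of_le_one_left (norm_nonneg _) hgeom)

section Field

variable {K : Type*} [NormedField K] [IsUltrametricDist K] {θ a b S T : K}

lemma norm_sub_one_le_of_norm_le_one (ha : ‖a‖ ≤ 1) : ‖a - 1‖ ≤ 1 :=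
  (norm_sub_le_max a 1).trans (max_le ha norm_one.le)

lemma norm_sub_one_le_of_one_le_norm (hθ : 1 ≤ ‖θ‖) : ‖θ - 1‖ ≤ ‖θ‖ :=
  (norm_sub_le_max θ 1).trans (max_le le_rfl (norm_one.trans_le hθ))

lemma norm_mobius_le_one (hθ : 1 ≤ ‖θ‖) (ha : ‖a‖ ≤ 1) (hS : ‖S‖ < 1) :
    ‖((θ - 1) * a + S + 1) / (S + θ)‖ ≤ 1 := by
  have hSθ : ‖S + θ‖ = ‖θ‖ := norm_add_eq_right_of_norm_lt (hS.trans_le hθ)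
  have hθ0 : 0 < ‖θ‖ := one_pos.trans_le hθ
  have hS0 : S + θ ≠ 0 := norm_pos_iff.mp (hSθ ▸ hθ0)
  rw [show ((θ - 1) * a + S + 1) / (S + θ) = 1 + (θ - 1) * (a - 1) / (S + θ) by
    field_simp
    ring]
  refine (norm_add_le_max _ _).trans (max_le norm_one.le ?_)
  rw [norm_div, norm_mul, hSθ, div_le_one hθ0]
  calc ‖θ - 1‖ * ‖a - 1‖ ≤ ‖θ‖ * 1 := by
        gcongr
        exacts [norm_sub_one_le_of_one_le_norm hθ, norm_sub_one_le_of_norm_le_one ha]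
    _ = ‖θ‖ := mul_one _

lemma norm_mobius_sub_mobius_le {D : ℝ} (hθ : 1 ≤ ‖θ‖) (hb : ‖b‖ ≤ 1) (hS : ‖S‖ < 1)
    (hT : ‖T‖ < 1) (hab : ‖a - b‖ ≤ D) (hST : ‖S - T‖ ≤ D) :
    ‖((θ - 1) * a + S + 1) / (S + θ) - ((θ - 1) * b + T + 1) / (T + θ)‖ ≤ D := by
  have hSθ : ‖S + θ‖ = ‖θ‖ := norm_add_eq_right_of_norm_lt (hS.trans_le hθ)
  have hTθ : ‖T + θ‖ = ‖θ‖ := norm_add_eq_right_of_norm_lt (hT.trans_le hθ)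
  have hθ0 : 0 < ‖θ‖ := one_pos.trans_le hθ
  have hS0 : S + θ ≠ 0 := norm_pos_iff.mp (hSθ ▸ hθ0)
  have hT0 : T + θ ≠ 0 := norm_pos_iff.mp (hTθ ▸ hθ0)
  have hD : 0 ≤ D := (norm_nonneg _).trans hab
  have key : ((θ - 1) * a + S + 1) / (S + θ) - ((θ - 1) * b + T + 1) / (T + θ) =
      (θ - 1) * ((a - b) / (S + θ) + (b - 1) * (T - S) / ((S + θ) * (T + θ))) := by
    field_simp
    ring
  have h₁ : ‖(a - b) / (S + θ)‖ ≤ D / ‖θ‖ := by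
    rw [norm_div, hSθ]
    gcongr
  have h₂ : ‖(b - 1) * (T - S) / ((S + θ) * (T + θ))‖ ≤ D / ‖θ‖ := by
    rw [norm_div, norm_mul, norm_mul, hSθ, hTθ, norm_sub_rev T S]
    calc ‖b - 1‖ * ‖S - T‖ / (‖θ‖ * ‖θ‖) ≤ 1 * D / (1 * ‖θ‖) := by
          gcongr
          exact norm_sub_one_le_of_norm_le_one hb
      _ = D / ‖θ‖ := by rw [one_mul, one_mul]
  rw [key, norm_mul]
  calc ‖θ - 1‖ * ‖(a - b) / (S + θ) + (b - 1) * (T - S) / ((S + θ) * (T + θ))‖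
      ≤ ‖θ‖ * (D / ‖θ‖) := by
        gcongr
        · exact norm_sub_one_le_of_one_le_norm hθ
        · exact (norm_add_le_max _ _).trans (max_le h₁ h₂)
    _ = D := mul_div_cancel₀ D hθ0.ne'

end Field

end IsUltrametricDist

open IsUltrametricDist

section Fmap

variable {p : ℕ} [Fact p.Prime] {θ : ℚ_[p]} {δ : ℝ} {x y : ℕ → ℚ_[p]}

lemma norm_Fmap_le_one (hθ : 1 ≤ ‖θ‖) (hδ : δ < 1) (hx : ∀ i, ‖x i‖ ≤ δ) (i : ℕ) :
    ‖Fmap θ x i‖ ≤ 1 :=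
  norm_mobius_le_one hθ ((hx i).trans hδ.le) ((norm_tsum_le_of_forall_le hx).trans_lt hδ)

lemma norm_Fmap_sub_Fmap_le {D : ℝ} (hθ : 1 ≤ ‖θ‖) (hδ : δ < 1) (hxs : Summable x)
    (hys : Summable y) (hx : ∀ i, ‖x i‖ ≤ δ) (hy : ∀ i, ‖y i‖ ≤ δ)
    (hxy : ∀ i, ‖x i - y i‖ ≤ D) (i : ℕ) :
    ‖Fmap θ x i - Fmap θ y i‖ ≤ D := by
  refine norm_mobius_sub_mobius_le hθ ((hy i).trans hδ.le)
    ((norm_tsum_le_of_forall_le hx).trans_lt hδ) ((norm_tsum_le_of_forall_le hy).trans_lt hδ)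
    (hxy i) ?_
  rw [← hxs.tsum_sub hys]
  exact norm_tsum_le_of_forall_le hxy

end Fmap

lemma Padic.summable_of_tendsto_zero {p : ℕ} [Fact p.Prime] {x : ℕ → ℚ_[p]}
    (hx : Tendsto x atTop (𝓝 0)) : Summable x :=
  NonarchimedeanAddGroup.summable_of_tendsto_cofinite_zero (by rwa [Nat.cofinite_eq_atTop])

theorem stmt5_general (p k : ℕ) [Fact p.Prime] (θ : ℚ_[p]) (hθ : 1 ≤ ‖θ‖)
    (δ : ℝ) (hδ1 : δ < 1) (l : ℕ → ℚ_[p])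
    (hl : ∀ i, ‖l i‖ ≤ δ)
    (x y : ℕ → ℚ_[p]) (hx0 : Tendsto x atTop (nhds 0)) (hx : ∀ i, ‖x i‖ ≤ δ)
    (hy0 : Tendsto y atTop (nhds 0)) (hy : ∀ i, ‖y i‖ ≤ δ) :
    (⨆ i, ‖l i * (Fmap θ x i) ^ k - l i * (Fmap θ y i) ^ k‖) ≤
      δ * ⨆ i, ‖x i - y i‖ := by
  have hδ : 0 ≤ δ := (norm_nonneg _).trans (hl 0)
  have hxy : ∀ i, ‖x i - y i‖ ≤ ⨆ j, ‖x j - y j‖ := le_ciSup ⟨δ, by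
    rintro _ ⟨j, rfl⟩
    exact (norm_sub_le_max _ _).trans (max_le (hx j) (hy j))⟩
  refine ciSup_le fun i => ?_
  rw [← mul_sub, norm_mul]
  calc ‖l i‖ * ‖Fmap θ x i ^ k - Fmap θ y i ^ k‖
      ≤ δ * ‖Fmap θ x i - Fmap θ y i‖ :=
        mul_le_mul (hl i) (norm_pow_sub_pow_le (norm_Fmap_le_one hθ hδ1 hx i)
          (norm_Fmap_le_one hθ hδ1 hy i) k) (norm_nonneg _) hδ
    _ ≤ δ * ⨆ j, ‖x j - y j‖ := by
        gcongr
        exact norm_Fmap_sub_Fmap_le hθ hδ1 (Padic.summable_of_tendsto_zero hx0)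
          (Padic.summable_of_tendsto_zero hy0) hx hy hxy i

theorem stmt5 (p k : ℕ) [Fact p.Prime] (hk : 1 ≤ k) (θ : ℚ_[p]) (hθ : 1 ≤ ‖θ‖)
    (δ : ℝ) (hδ0 : 0 < δ) (hδ1 : δ < 1) (l : ℕ → ℚ_[p])
    (hl0 : Tendsto l atTop (nhds 0)) (hl : ∀ i, ‖l i‖ ≤ δ)
    (x y : ℕ → ℚ_[p]) (hx0 : Tendsto x atTop (nhds 0)) (hx : ∀ i, ‖x i‖ ≤ δ)
    (hy0 : Tendsto y atTop (nhds 0)) (hy : ∀ i, ‖y i‖ ≤ δ) :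
    (⨆ i, ‖l i * (Fmap θ x i) ^ k - l i * (Fmap θ y i) ^ k‖) ≤
      δ * ⨆ i, ‖x i - y i‖ :=
  stmt5_general p k θ hθ δ hδ1 l hl x y hx0 hx hy0 hy
end

section
/- Let p be a prime, k ≥ 1, and suppose for each edge ⟨x,y⟩ of the rooted k-ary tree a p-adic number θ_{xy} with |θ_{xy}|_p ≥ 1 is given. Let 0 < δ < 1 and let λ be a null sequence in ℚ_p with |λ(i)|_p ≤ δ for all i. If (ĥ_x)_{x} and (ŝ_x)_{x} are two families in B_δ ⊂ c_0(ℚ_p), indexed by non-root vertices, both satisfying ĥ_{i,x} = λ(i)·∏_{y∈S(x)} F_i(ĥ_y, θ_{xy}) for all i ∈ ℕ and all non-root x (and similarly for ŝ), then ĥ_x = ŝ_x for every non-root vertex x. -/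
open Filter Topology BigOperators

section aux

variable {p : ℕ} [Fact p.Prime]

lemma my_tsum_norm_le {x : ℕ → ℚ_[p]} {C : ℝ} (hC : 0 ≤ C) (hx : ∀ j, ‖x j‖ ≤ C) :
    ‖∑' j, x j‖ ≤ C :=
  IsUltrametricDist.norm_tsum_le_of_forall_le_of_nonneg hC hx

lemma my_den_norm {θ : ℚ_[p]} (hθ : 1 ≤ ‖θ‖) {S : ℚ_[p]} (hS : ‖S‖ < 1) :
    ‖S + θ‖ = ‖θ‖ := by
  have hne : ‖S‖ ≠ ‖θ‖ := ne_of_lt (lt_of_lt_of_le hS hθ)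
  rw [Padic.add_eq_max_of_ne hne, max_eq_right (le_of_lt (lt_of_lt_of_le hS hθ))]

lemma my_theta_sub_one {θ : ℚ_[p]} (hθ : 1 ≤ ‖θ‖) : ‖θ - 1‖ ≤ ‖θ‖ := by
  rw [sub_eq_add_neg]
  exact (Padic.nonarchimedean θ (-1)).trans
    (max_le le_rfl (by simpa using hθ))

lemma my_Fmap_norm_le {θ : ℚ_[p]} (hθ : 1 ≤ ‖θ‖) {x : ℕ → ℚ_[p]} {δ : ℝ}
    (hδ0 : 0 ≤ δ) (hδ1 : δ < 1) (hx : ∀ j, ‖x j‖ ≤ δ) (i : ℕ) :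
    ‖Fmap θ x i‖ ≤ 1 := by
  have hS : ‖∑' j, x j‖ ≤ δ := my_tsum_norm_le hδ0 hx
  have hS1 : ‖∑' j, x j‖ < 1 := lt_of_le_of_lt hS hδ1
  have hden : ‖(∑' j, x j) + θ‖ = ‖θ‖ := my_den_norm hθ hS1
  have hθpos : (0:ℝ) < ‖θ‖ := lt_of_lt_of_le one_pos hθ
  rw [Fmap, norm_div, hden, div_le_one hθpos]
  refine le_trans (Padic.nonarchimedean _ _) (max_le ?_ (by simpa using hθ))
  refine le_trans (Padic.nonarchimedean _ _) (max_le ?_ (le_trans hS1.le hθ))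
  rw [norm_mul]
  calc ‖θ - 1‖ * ‖x i‖ ≤ ‖θ‖ * 1 :=
        mul_le_mul (my_theta_sub_one hθ) (le_trans (hx i) hδ1.le) (norm_nonneg _) hθpos.le
    _ = ‖θ‖ := mul_one _

lemma my_Fmap_diff {θ : ℚ_[p]} (hθ : 1 ≤ ‖θ‖) {a b : ℕ → ℚ_[p]} {δ ε : ℝ}
    (hδ0 : 0 ≤ δ) (hδ1 : δ < 1) (hε0 : 0 ≤ ε)
    (ha : ∀ j, ‖a j‖ ≤ δ) (hb : ∀ j, ‖b j‖ ≤ δ)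
    (hsa : Summable a) (hsb : Summable b)
    (hd : ∀ j, ‖a j - b j‖ ≤ ε) (i : ℕ) :
    ‖Fmap θ a i - Fmap θ b i‖ ≤ ε := by
  set Sa := ∑' j, a j with hSa_def
  set Sb := ∑' j, b j with hSb_def
  have hSa : ‖Sa‖ ≤ δ := my_tsum_norm_le hδ0 ha
  have hSb : ‖Sb‖ ≤ δ := my_tsum_norm_le hδ0 hb
  have hda : ‖Sa + θ‖ = ‖θ‖ := my_den_norm hθ (lt_of_le_of_lt hSa hδ1)
  have hdb : ‖Sb + θ‖ = ‖θ‖ := my_den_norm hθ (lt_of_le_of_lt hSb hδ1)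
  have hθpos : (0:ℝ) < ‖θ‖ := lt_of_lt_of_le one_pos hθ
  have hna : Sa + θ ≠ 0 := fun H => by rw [H, norm_zero] at hda; linarith
  have hnb : Sb + θ ≠ 0 := fun H => by rw [H, norm_zero] at hdb; linarith
  have hSab : ‖Sb - Sa‖ ≤ ε := by
    rw [hSa_def, hSb_def, ← Summable.tsum_sub hsb hsa]
    exact my_tsum_norm_le hε0 (fun j => by
      rw [norm_sub_rev]; exact hd j)
  have key : Fmap θ a i - Fmap θ b i =
      ((θ - 1) * ((Sb + θ) * (a i - b i) + (b i - 1) * (Sb - Sa))) /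
        ((Sa + θ) * (Sb + θ)) := by
    rw [Fmap, Fmap, ← hSa_def, ← hSb_def, div_sub_div _ _ hna hnb, div_eq_div_iff
      (mul_ne_zero hna hnb) (mul_ne_zero hna hnb)]
    ring
  have hb1 : ‖b i - 1‖ ≤ 1 := by
    have := Padic.nonarchimedean (b i) (-1)
    simp only [← sub_eq_add_neg, norm_neg, norm_one] at this
    exact this.trans (max_le (le_trans (hb i) hδ1.le) le_rfl)
  have hbracket : ‖(Sb + θ) * (a i - b i) + (b i - 1) * (Sb - Sa)‖ ≤ ‖θ‖ * ε := by
    refine le_trans (Padic.nonarchimedean _ _) (max_le ?_ ?_)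
    · rw [norm_mul, hdb]
      exact mul_le_mul_of_nonneg_left (hd i) hθpos.le
    · rw [norm_mul]
      calc ‖b i - 1‖ * ‖Sb - Sa‖ ≤ 1 * ε :=
            mul_le_mul hb1 hSab (norm_nonneg _) zero_le_one
        _ ≤ ‖θ‖ * ε := by nlinarith
  rw [key, norm_div, norm_mul, norm_mul, hda, hdb]
  rw [div_le_iff₀ (by positivity)]
  calc ‖θ - 1‖ * ‖(Sb + θ) * (a i - b i) + (b i - 1) * (Sb - Sa)‖
      ≤ ‖θ‖ * (‖θ‖ * ε) :=
        mul_le_mul (my_theta_sub_one hθ) hbracket (norm_nonneg _) hθpos.le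
    _ = ε * (‖θ‖ * ‖θ‖) := by ring

lemma my_prod_diff {ι : Type*} (t : Finset ι) (a b : ι → ℚ_[p]) {ε : ℝ} (hε : 0 ≤ ε)
    (ha : ∀ m, ‖a m‖ ≤ 1) (hb : ∀ m, ‖b m‖ ≤ 1) (hd : ∀ m, ‖a m - b m‖ ≤ ε) :
    ‖(∏ m ∈ t, a m) - ∏ m ∈ t, b m‖ ≤ ε := by
  classical
  induction t using Finset.induction with
  | empty => simpa using hε
  | @insert m t hm ih =>
    rw [Finset.prod_insert hm, Finset.prod_insert hm]
    have hsplit : a m * (∏ x ∈ t, a x) - b m * (∏ x ∈ t, b x) =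
        a m * ((∏ x ∈ t, a x) - ∏ x ∈ t, b x) + (a m - b m) * ∏ x ∈ t, b x := by ring
    rw [hsplit]
    refine le_trans (Padic.nonarchimedean _ _) (max_le ?_ ?_)
    · rw [norm_mul]
      calc ‖a m‖ * ‖(∏ x ∈ t, a x) - ∏ x ∈ t, b x‖ ≤ 1 * ε :=
            mul_le_mul (ha m) ih (norm_nonneg _) zero_le_one
        _ = ε := one_mul _
    · rw [norm_mul]
      have hpb : ‖∏ x ∈ t, b x‖ ≤ 1 := by
        rw [norm_prod]
        exact Finset.prod_le_one (fun x _ => norm_nonneg _) (fun x _ => hb x)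
      calc ‖a m - b m‖ * ‖∏ x ∈ t, b x‖ ≤ ε * 1 :=
            mul_le_mul (hd m) hpb (norm_nonneg _) hε
        _ = ε := mul_one _

end aux

theorem stmt15 (p k : ℕ) [Fact p.Prime] (hk : 0 < k)
    (θ : List (Fin k) → Fin k → ℚ_[p]) (hθ : ∀ x m, 1 ≤ ‖θ x m‖)
    (δ : ℝ) (hδ0 : 0 < δ) (hδ1 : δ < 1) (l : ℕ → ℚ_[p])
    (hl0 : Tendsto l atTop (nhds 0)) (hl : ∀ i, ‖l i‖ ≤ δ)
    (h s : List (Fin k) → ℕ → ℚ_[p])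
    (hB : ∀ x : List (Fin k), x ≠ [] →
      Tendsto (h x) atTop (nhds 0) ∧ ∀ i, ‖h x i‖ ≤ δ)
    (sB : ∀ x : List (Fin k), x ≠ [] →
      Tendsto (s x) atTop (nhds 0) ∧ ∀ i, ‖s x i‖ ≤ δ)
    (heq : ∀ x : List (Fin k), x ≠ [] → ∀ i,
      h x i = l i * ∏ m : Fin k, Fmap (θ x m) (h (x ++ [m])) i)
    (seq : ∀ x : List (Fin k), x ≠ [] → ∀ i,
      s x i = l i * ∏ m : Fin k, Fmap (θ x m) (s (x ++ [m])) i) :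
    ∀ x : List (Fin k), x ≠ [] → h x = s x := by
  have hδ0' : (0:ℝ) ≤ δ := hδ0.le
  have hsumh : ∀ y : List (Fin k), y ≠ [] → Summable (h y) := fun y hy =>
    NonarchimedeanAddGroup.summable_of_tendsto_cofinite_zero
      (Nat.cofinite_eq_atTop ▸ (hB y hy).1)
  have hsums : ∀ y : List (Fin k), y ≠ [] → Summable (s y) := fun y hy =>
    NonarchimedeanAddGroup.summable_of_tendsto_cofinite_zero
      (Nat.cofinite_eq_atTop ▸ (sB y hy).1)
  have key : ∀ n : ℕ, ∀ x : List (Fin k), x ≠ [] → ∀ i, ‖h x i - s x i‖ ≤ δ ^ n := by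
    intro n
    induction n with
    | zero =>
      intro x hx i
      rw [pow_zero]
      rw [sub_eq_add_neg]
      refine le_trans (Padic.nonarchimedean _ _) (max_le ?_ ?_)
      rotate_left
      rw [norm_neg]
      · exact le_trans ((sB x hx).2 i) hδ1.le
      · exact le_trans ((hB x hx).2 i) hδ1.le
    | succ n ih =>
      intro x hx i
      have hεn : (0:ℝ) ≤ δ ^ n := pow_nonneg hδ0' n
      have hne : ∀ m : Fin k, x ++ [m] ≠ ([] : List (Fin k)) := fun m => by
        simp
      have hprod : ‖(∏ m : Fin k, Fmap (θ x m) (h (x ++ [m])) i)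
          - ∏ m : Fin k, Fmap (θ x m) (s (x ++ [m])) i‖ ≤ δ ^ n := by
        refine my_prod_diff Finset.univ _ _ hεn ?_ ?_ ?_
        · exact fun m => my_Fmap_norm_le (hθ x m) hδ0' hδ1 ((hB _ (hne m)).2) i
        · exact fun m => my_Fmap_norm_le (hθ x m) hδ0' hδ1 ((sB _ (hne m)).2) i
        · intro m
          exact my_Fmap_diff (hθ x m) hδ0' hδ1 hεn ((hB _ (hne m)).2) ((sB _ (hne m)).2)
            (hsumh _ (hne m)) (hsums _ (hne m)) (fun j => ih _ (hne m) j) i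
      rw [heq x hx i, seq x hx i, ← mul_sub, norm_mul, pow_succ']
      exact mul_le_mul (hl i) hprod (norm_nonneg _) hδ0'
  intro x hx
  funext i
  have h0 : ‖h x i - s x i‖ ≤ 0 := by
    have hlim : Tendsto (fun n : ℕ => δ ^ n) atTop (nhds 0) :=
      tendsto_pow_atTop_nhds_zero_of_lt_one hδ0' hδ1
    exact ge_of_tendsto hlim (Eventually.of_forall fun n => key n x hx i)
  have : ‖h x i - s x i‖ = 0 := le_antisymm h0 (norm_nonneg _)
  exact sub_eq_zero.mp (norm_eq_zero.mp this)
end
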